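/- Let X ⊆ A^ℤ be a minimal subshift and let c : A* → ℝ be a letter-coboundary on X. Then Σ_{a∈A} μ([a]) · c(a) = 0 for every S-invariant Borel probability measure μ on X. -/

import Mathlib

/-!
Some letter `a` occurs in every point of the minimal subshift `X` with gaps bounded by some `R`
(minimality gives one occurrence in each point, compactness a uniform bound). Between two
occurrences of `a` a point reads a concatenation of return words to `a`, on which `c` vanishes,
so the Birkhoff sums `∑_{k<n} c(x_k)` are bounded on `X` uniformly in `n`. By shift invariance
their integrals equal `n · ∑_a μ([a]) c(a)`, which forces that sum to be zero.
-/

open Filter Topology MeasureTheory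

namespace SAdicPaper

variable {A B : Type*}

/-! ### Basic symbolic dynamics on the full shift `ℤ → A` -/

/-- The shift map `S` on the full shift. -/
def shift (x : ℤ → A) : ℤ → A := fun n => x (n + 1)

/-- The iterate `S^k` of the shift, for `k : ℤ`. -/
def shiftIter (k : ℤ) (x : ℤ → A) : ℤ → A := fun n => x (n + k)

/-- The finite word `x_i x_{i+1} ⋯ x_{i+l-1}`. -/
def window (x : ℤ → A) (i : ℤ) (l : ℕ) : List A :=
  (List.range l).map fun k => x (i + (k : ℤ))

/-- A subshift: a closed shift-invariant subset of the full shift. -/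
def IsSubshift [TopologicalSpace A] (X : Set (ℤ → A)) : Prop :=
  IsClosed X ∧ shift '' X = X

/-- The language of a set of bi-infinite sequences: all finite factors of its points. -/
def langOf (X : Set (ℤ → A)) : Set (List A) :=
  {w | ∃ x ∈ X, ∃ i : ℤ, w = window x i w.length}

/-- The (two-sided) orbit of a point under the shift. -/
def orbit (x : ℤ → A) : Set (ℤ → A) := Set.range fun k : ℤ => shiftIter k x

/-- A minimal subshift: nonempty and every orbit is dense. -/
def IsMinimalSubshift [TopologicalSpace A] (X : Set (ℤ → A)) : Prop :=
  IsSubshift X ∧ X.Nonempty ∧ ∀ x ∈ X, X ⊆ closure (orbit x)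

/-- A transitive subshift: some orbit is dense. -/
def IsTransitiveSubshift [TopologicalSpace A] (X : Set (ℤ → A)) : Prop :=
  IsSubshift X ∧ ∃ x ∈ X, X ⊆ closure (orbit x)

/-- `α` is a continuous additive eigenvalue of `(X, S)`: there is a continuous
`g : X → ℝ/ℤ` with `g (S x) = g x + α (mod ℤ)`. -/
def IsEigenvalue [TopologicalSpace A] (X : Set (ℤ → A)) (α : ℝ) : Prop :=
  ∃ g : (ℤ → A) → AddCircle (1 : ℝ), ContinuousOn g X ∧
    ∀ x ∈ X, g (shift x) = g x + (α : AddCircle (1 : ℝ))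

/-- `‖x‖`: distance from a real number to the nearest integer. -/
noncomputable def dnint (x : ℝ) : ℝ := |x - round x|

/-- `{x}`: the centered fractional part, the unique element of `[-1/2, 1/2)`
such that `x + {x}` is an integer. -/
noncomputable def cfrac (x : ℝ) : ℝ := (⌈x - 1 / 2⌉ : ℤ) - x

/-- The cylinder `[u] = {x ∈ X : x_{[0,|u|)} = u}`. -/
def cyl (X : Set (ℤ → A)) (u : List A) : Set (ℤ → A) :=
  {x ∈ X | window x 0 u.length = u}

/-- The factor complexity `p_X(n)`. -/
noncomputable def pcomplex (X : Set (ℤ → A)) (n : ℕ) : ℕ :=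
  Set.ncard {w : List A | w ∈ langOf X ∧ w.length = n}

/-! ### Letter-coboundaries -/

/-- The extension of a map `c : A → ℝ` to the monoid morphism `A* → (ℝ, +)`. -/
def wsum (c : A → ℝ) (w : List A) : ℝ := (w.map c).sum

/-- `w` is a return word to the letter `a` in `X`: `w ++ [a] ∈ L(X)` and `w ++ [a]`
contains exactly two occurrences of `a`, one as a prefix and one as a suffix. -/
def IsReturnWord (X : Set (ℤ → A)) (a : A) (w : List A) : Prop :=
  w ++ [a] ∈ langOf X ∧ w.head? = some a ∧
    ∀ (i : ℕ) (h : i < w.length), 0 < i → w.get ⟨i, h⟩ ≠ a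

/-- A letter-coboundary on `X` (identified with its values on letters):
a morphism `A* → (ℝ, +)` vanishing on all return words to letters. -/
def IsLetterCoboundary (X : Set (ℤ → A)) (c : A → ℝ) : Prop :=
  ∀ (a : A) (w : List A), IsReturnWord X a w → wsum c w = 0

/-- `w` is a return word to the (nonempty) word `u` in `X`. -/
def IsReturnWordTo (X : Set (ℤ → A)) (u w : List A) : Prop :=
  w ≠ [] ∧ (w ++ u) ∈ langOf X ∧ u <+: (w ++ u) ∧
    ∀ i : ℕ, ((w ++ u).drop i).take u.length = u → i + u.length ≤ (w ++ u).length →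
      i = 0 ∨ i = w.length

/-! ### Extension graphs -/

/-- Vertices of the extension graph of `w`: two copies of the alphabet, restricted to the
letters that extend `w` on the corresponding side. -/
def extVertex (X : Set (ℤ → A)) (w : List A) : A ⊕ A → Prop
  | Sum.inl a => (a :: w) ∈ langOf X
  | Sum.inr b => (w ++ [b]) ∈ langOf X

/-- The edge relation of the extension graph: `a_L — b_R` when `a w b ∈ L(X)`. -/
def extAdjRaw (X : Set (ℤ → A)) (w : List A) (u v : A ⊕ A) : Prop :=
  ∃ a b, u = Sum.inl a ∧ v = Sum.inr b ∧ (a :: (w ++ [b])) ∈ langOf X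

/-- The extension graph `Γ_X(w)` of a word `w` in `X`. -/
def extGraph (X : Set (ℤ → A)) (w : List A) :
    SimpleGraph {v : A ⊕ A // extVertex X w v} where
  Adj u v := extAdjRaw X w u.1 v.1 ∨ extAdjRaw X w v.1 u.1
  symm := ⟨fun u v h => Or.symm h⟩
  loopless := ⟨by
    rintro ⟨v, hv⟩ h
    rcases h with ⟨a, b, h1, h2, -⟩ | ⟨a, b, h1, h2, -⟩ <;> (rw [h1] at h2; simp at h2)⟩

/-- The total number of connected components of the extension graphs of all
words of length `m` in `L(X)`. -/
noncomputable def totalComponents (X : Set (ℤ → A)) (m : ℕ) : ℕ :=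
  Nat.card (Σ w : {w : List A // w ∈ langOf X ∧ w.length = m},
    (extGraph X w.1).ConnectedComponent)

/-! ### The vector space of letter-coboundaries -/

lemma wsum_zero (w : List A) : wsum (0 : A → ℝ) w = 0 := by
  induction w with
  | nil => rfl
  | cons a t ih => simp [wsum, List.map_cons, List.sum_cons] at ih ⊢; exact ih

lemma wsum_add (c d : A → ℝ) (w : List A) :
    wsum (c + d) w = wsum c w + wsum d w := by
  induction w with
  | nil => simp [wsum]
  | cons a t ih =>
      simp only [wsum, List.map_cons, List.sum_cons, Pi.add_apply] at ih ⊢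
      rw [ih]; ring

lemma wsum_smul (r : ℝ) (c : A → ℝ) (w : List A) :
    wsum (r • c) w = r * wsum c w := by
  induction w with
  | nil => simp [wsum]
  | cons a t ih =>
      simp only [wsum, List.map_cons, List.sum_cons, Pi.smul_apply, smul_eq_mul] at ih ⊢
      rw [ih]; ring

/-- The `ℝ`-vector space `C_X` of letter-coboundaries on `X`. -/
def cobSpace (X : Set (ℤ → A)) : Submodule ℝ (A → ℝ) where
  carrier := {c | IsLetterCoboundary X c}
  zero_mem' := fun _ w _ => wsum_zero w
  add_mem' := by
    intro c d hc hd a w hw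
    rw [wsum_add, hc a w hw, hd a w hw, add_zero]
  smul_mem' := by
    intro r c hc a w hw
    rw [wsum_smul, hc a w hw, mul_zero]

/-! ### Directive sequences -/

variable {Alph : ℕ → Type*}

/-- `seg τ n k = τ_{n,n+k} = τ_n ∘ τ_{n+1} ∘ ⋯ ∘ τ_{n+k-1}`, applied to a letter. -/
def seg (τ : ∀ n, Alph (n + 1) → List (Alph n)) (n : ℕ) :
    (k : ℕ) → Alph (n + k) → List (Alph n)
  | 0, a => [a]
  | k + 1, a => (τ (n + k) a).flatMap (seg τ n k)

/-- `toZero τ n = τ_{0,n}`, applied to a letter. -/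
def toZero (τ : ∀ n, Alph (n + 1) → List (Alph n)) :
    (n : ℕ) → Alph n → List (Alph 0)
  | 0, a => [a]
  | n + 1, a => (τ n a).flatMap (toZero τ n)

/-- The height `h_n(u) = |τ_{0,n}(u)|` (so `h_0(u) = |u|`). -/
def heightW (τ : ∀ n, Alph (n + 1) → List (Alph n)) (n : ℕ) (u : List (Alph n)) : ℕ :=
  (u.flatMap (toZero τ n)).length

/-- Every `τ_n` is a substitution: non-erasing and letter-onto. -/
def IsDirective (τ : ∀ n, Alph (n + 1) → List (Alph n)) : Prop :=
  ∀ n, (∀ a : Alph (n + 1), τ n a ≠ []) ∧ ∀ b : Alph n, ∃ a : Alph (n + 1), b ∈ τ n a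

/-- The level-`n` language `L^{(n)}_τ`: the words occurring in some `τ_{n,m}(a)`, `m > n`. -/
def levelLang (τ : ∀ n, Alph (n + 1) → List (Alph n)) (n : ℕ) : Set (List (Alph n)) :=
  {w | ∃ k : ℕ, 0 < k ∧ ∃ a : Alph (n + k), w <:+: seg τ n k a}

/-- The level-`n` subshift `X^{(n)}_τ`: the points all of whose factors lie in `L^{(n)}_τ`.
`X_τ = levelShift τ 0`. -/
def levelShift (τ : ∀ n, Alph (n + 1) → List (Alph n)) (n : ℕ) : Set (ℤ → Alph n) :=
  {x | ∀ (i : ℤ) (l : ℕ), window x i l ∈ levelLang τ n}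

/-- Primitivity of a directive sequence. -/
def IsPrimitiveSeq (τ : ∀ n, Alph (n + 1) → List (Alph n)) : Prop :=
  ∀ n, ∃ k, 0 < k ∧ ∀ (a : Alph (n + k)) (b : Alph n), b ∈ seg τ n k a

/-- Positivity of a directive sequence: every letter of `A_n` occurs in every `τ_n(b)`. -/
def IsPositiveSeq (τ : ∀ n, Alph (n + 1) → List (Alph n)) : Prop :=
  ∀ (n : ℕ) (b : Alph (n + 1)) (a : Alph n), a ∈ τ n b

/-- `y` is the image of the bi-infinite sequence `x` under the substitution `σ`,
aligned so that `σ(x_0)` starts at position `0`. -/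
def SubstPoint (σ : B → List A) (x : ℤ → B) (y : ℤ → A) : Prop :=
  ∀ m : ℕ,
    window y (-(∑ t ∈ Finset.range m, ((σ (x (-1 - (t : ℤ)))).length : ℤ)))
        ((window x (-(m : ℤ)) (2 * m + 1)).flatMap σ).length
      = (window x (-(m : ℤ)) (2 * m + 1)).flatMap σ

/-- The base `B_n(a) = {τ_{0,n}(x) : x ∈ X^{(n)}_τ, x_0 = a}` of the Kakutani–Rokhlin tower. -/
def baseSet (τ : ∀ n, Alph (n + 1) → List (Alph n)) (n : ℕ) (a : Alph n) :
    Set (ℤ → Alph 0) :=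
  {y | ∃ x ∈ levelShift τ n, x 0 = a ∧ SubstPoint (toZero τ n) x y}

/-- Recognizability: for every `n ≥ 1`, the sets `S^k B_n(a)`, `a ∈ A_n`,
`0 ≤ k < h_n(a)`, are pairwise disjoint. -/
def IsRecognizable (τ : ∀ n, Alph (n + 1) → List (Alph n)) : Prop :=
  ∀ n : ℕ, 1 ≤ n → ∀ (a a' : Alph n) (k k' : ℕ),
    k < heightW τ n [a] → k' < heightW τ n [a'] → ¬(a = a' ∧ k = k') →
    Disjoint (shiftIter (k : ℤ) '' baseSet τ n a) (shiftIter (k' : ℤ) '' baseSet τ n a')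

/-- `min_{a ∈ A_n} |τ_{0,n}(a)| → ∞`. -/
def IsEverywhereGrowing (τ : ∀ n, Alph (n + 1) → List (Alph n)) : Prop :=
  ∀ N : ℕ, ∃ M : ℕ, ∀ n, M ≤ n → ∀ a : Alph n, N ≤ (toZero τ n a).length

/-- Decisiveness of an everywhere growing directive sequence. -/
def IsDecisive (τ : ∀ n, Alph (n + 1) → List (Alph n)) : Prop :=
  IsEverywhereGrowing τ ∧
  ∀ n : ℕ, ∃ l r : Alph (n + 1) → Alph n,
    ∀ a b : Alph (n + 1), [a, b] ∈ langOf (levelShift τ (n + 1)) →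
      (τ n b).head? = some (r a) ∧ (τ n a).getLast? = some (l b)

/-- Unimodularity: every incidence matrix has determinant `±1`. -/
def IsUnimodularSeq [∀ n, Fintype (Alph n)] [∀ n, DecidableEq (Alph n)]
    (τ : ∀ n, Alph (n + 1) → List (Alph n)) : Prop :=
  ∀ n, ∃ e : Alph n ≃ Alph (n + 1),
    (Matrix.det (Matrix.of fun b a : Alph n => ((τ n (e a)).count b : ℤ))).natAbs = 1

/-! ### Single substitutions -/

/-- Iteration `τ^m` of a substitution on a single alphabet, applied to a letter. -/
def substPow (τ : A → List A) : ℕ → A → List A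
  | 0, a => [a]
  | k + 1, a => (τ a).flatMap (substPow τ k)

/-- The substitutive subshift `X_τ` generated by the constant directive sequence `(τ)`. -/
def substShift (τ : A → List A) : Set (ℤ → A) :=
  {x | ∀ (i : ℤ) (l : ℕ), ∃ m : ℕ, 1 ≤ m ∧ ∃ a : A, window x i l <:+: substPow τ m a}

/-- The incidence matrix of a substitution (with real entries). -/
def incMat [DecidableEq A] (τ : A → List A) : Matrix A A ℝ :=
  Matrix.of fun b a => ((τ a).count b : ℝ)

/-- A primitive substitution: some power of its incidence matrix is strictly positive. -/
def IsPrimitiveSubst [Fintype A] [DecidableEq A] (τ : A → List A) : Prop :=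
  ∃ k : ℕ, 0 < k ∧ ∀ b a : A, 0 < (incMat τ ^ k) b a

/-- Aperiodicity: `X_τ` contains no shift-periodic point. -/
def IsAperiodicSubst (τ : A → List A) : Prop :=
  ∀ x ∈ substShift τ, ∀ p : ℕ, 0 < p → shiftIter (p : ℤ) x ≠ x

/-- The stable space `V_{X_τ}` of row vectors `v` with `v M_τ^n → 0`. -/
def stableSpace [Fintype A] [DecidableEq A] (τ : A → List A) : Submodule ℝ (A → ℝ) where
  carrier := {v | Tendsto (fun n : ℕ => Matrix.vecMul v (incMat τ ^ n)) atTop (nhds 0)}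
  zero_mem' := by
    simp only [Set.mem_setOf_eq, Matrix.zero_vecMul]
    exact tendsto_const_nhds
  add_mem' := by
    intro u v hu hv
    have := hu.add hv
    simp only [Set.mem_setOf_eq] at *
    simpa [Matrix.add_vecMul] using this
  smul_mem' := by
    intro r v hv
    have := hv.const_smul r
    simp only [Set.mem_setOf_eq] at *
    simpa [Matrix.vecMul_smul, Matrix.smul_vecMul] using this

/-- `X` is balanced on the letter `a`. -/
def IsBalancedOnLetter [DecidableEq A] (X : Set (ℤ → A)) (a : A) : Prop :=
  ∃ C : ℕ, 0 < C ∧ ∀ w ∈ langOf X, ∀ w' ∈ langOf X, w.length = w'.length →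
    |(w.count a : ℤ) - (w'.count a : ℤ)| ≤ (C : ℤ)

/-- `X` is balanced on letters. -/
def IsBalancedOnLetters [DecidableEq A] (X : Set (ℤ → A)) : Prop :=
  ∀ a : A, IsBalancedOnLetter X a

/-- A function `f : X → ℝ` is balanced on a (minimal) subshift `X`. -/
def IsBalancedFn (X : Set (ℤ → A)) (f : (ℤ → A) → ℝ) : Prop :=
  ∃ C : ℝ, 0 < C ∧ ∀ x ∈ X, ∀ y ∈ X, ∀ n : ℕ, 1 ≤ n →
    |∑ i ∈ Finset.range (n + 1), (f (shiftIter (i : ℤ) x) - f (shiftIter (i : ℤ) y))| ≤ C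

section Words

lemma wsum_append (c : A → ℝ) (u v : List A) : wsum c (u ++ v) = wsum c u + wsum c v := by
  simp [wsum]

lemma abs_wsum_le {c : A → ℝ} {M : ℝ} (hM : ∀ a, |c a| ≤ M) (w : List A) :
    |wsum c w| ≤ w.length * M := by
  induction w with
  | nil => simp [wsum]
  | cons a w ih =>
      have hsum : wsum c (a :: w) = c a + wsum c w := by simp [wsum]
      rw [hsum, List.length_cons, Nat.cast_succ]
      linarith [abs_add_le (c a) (wsum c w), hM a]

/-- `window` elaborates with `List.range l` coerced to `List ℤ`; this is the form to compute
with. -/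
lemma window_eq_map_range (x : ℤ → A) (i : ℤ) (l : ℕ) :
    window x i l = (List.range l).map fun k : ℕ => x (i + k) := by
  simp only [window, List.bind_eq_flatMap, List.pure_def, ← List.map_eq_flatMap, List.map_map]
  rfl

lemma window_length (x : ℤ → A) (i : ℤ) (l : ℕ) : (window x i l).length = l := by
  simp [window_eq_map_range]

lemma getElem_window (x : ℤ → A) (i : ℤ) (l j : ℕ) (hj : j < (window x i l).length) :
    (window x i l)[j] = x (i + j) := by
  simp [window_eq_map_range]

lemma window_add (x : ℤ → A) (i : ℤ) (l m : ℕ) :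
    window x i (l + m) = window x i l ++ window x (i + l) m := by
  simp [window_eq_map_range, List.range_add, add_assoc]

lemma window_succ (x : ℤ → A) (i : ℤ) (l : ℕ) :
    window x i (l + 1) = window x i l ++ [x (i + l)] := by
  simp [window_eq_map_range, List.range_succ]

lemma window_mem_langOf {X : Set (ℤ → A)} {x : ℤ → A} (hx : x ∈ X) (i : ℤ) (l : ℕ) :
    window x i l ∈ langOf X :=
  ⟨x, hx, i, by rw [window_length]⟩

end Words

section ReturnWords

variable {X : Set (ℤ → A)} {x : ℤ → A} {a : A} {i : ℤ}

lemma isReturnWord_window (hx : x ∈ X) {L : ℕ} (hL : 0 < L) (hi : x i = a)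
    (hiL : x (i + L) = a) (hbetween : ∀ j : ℕ, 0 < j → j < L → x (i + j) ≠ a) :
    IsReturnWord X a (window x i L) := by
  refine ⟨?_, ?_, fun j hj hj0 => ?_⟩
  · rw [← hiL, ← window_succ]
    exact window_mem_langOf hx i (L + 1)
  · obtain ⟨L, rfl⟩ := Nat.exists_eq_add_of_lt hL
    simp [window_eq_map_range, List.range_succ_eq_map, hi]
  · rw [List.get_eq_getElem, getElem_window]
    exact hbetween j hj0 (by simpa [window_length] using hj)

variable {c : A → ℝ}

lemma IsLetterCoboundary.wsum_window_eq_zero (hc : IsLetterCoboundary X c) (hx : x ∈ X)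
    {L : ℕ} (hi : x i = a) (hiL : x (i + L) = a) : wsum c (window x i L) = 0 := by
  induction L using Nat.strong_induction_on generalizing i with
  | _ L ih =>
    rcases Nat.eq_zero_or_pos L with rfl | hL
    · simp [window_eq_map_range, wsum]
    classical
    have hex : ∃ k : ℕ, 0 < k ∧ x (i + k) = a := ⟨L, hL, hiL⟩
    obtain ⟨hk, hika⟩ := Nat.find_spec hex
    obtain ⟨m, hm⟩ := Nat.exists_eq_add_of_le (Nat.find_min' hex ⟨hL, hiL⟩)
    have hreturn : IsReturnWord X a (window x i (Nat.find hex)) :=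
      isReturnWord_window hx hk hi hika fun j hj0 hj => (Nat.find_min hex hj ⟨hj0, ·⟩)
    subst hm
    rw [window_add, wsum_append, hc a _ hreturn,
      ih m (by omega) hika (by rwa [add_assoc, ← Nat.cast_add]), add_zero]

lemma IsLetterCoboundary.wsum_window_eq_of_apply_eq (hc : IsLetterCoboundary X c) (hx : x ∈ X)
    {p q : ℕ} (hp : x (i + p) = a) (hq : x (i + q) = a) :
    wsum c (window x i p) = wsum c (window x i q) := by
  wlog hpq : p ≤ q
  · exact (this hc hx hq hp (le_of_not_ge hpq)).symm
  obtain ⟨L, rfl⟩ := Nat.exists_eq_add_of_le hpq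
  rw [window_add, wsum_append,
    hc.wsum_window_eq_zero hx hp (by rwa [add_assoc, ← Nat.cast_add]), add_zero]

end ReturnWords

section Minimality

lemma shift_injective : Function.Injective (shift : (ℤ → A) → ℤ → A) := fun x y h =>
  funext fun n => by simpa [shift] using congrFun h (n - 1)

lemma shiftIter_zero (x : ℤ → A) : shiftIter 0 x = x := by
  funext n
  simp [shiftIter]

lemma shiftIter_add_one (k : ℤ) (x : ℤ → A) :
    shiftIter (k + 1) x = shift (shiftIter k x) := by
  funext n
  simp [shiftIter, shift, add_assoc, add_comm 1 k]

variable [TopologicalSpace A] {X : Set (ℤ → A)}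

lemma IsSubshift.shift_mem_iff (hX : IsSubshift X) {x : ℤ → A} : shift x ∈ X ↔ x ∈ X := by
  conv_lhs => rw [← hX.2]
  exact shift_injective.mem_set_image

lemma IsSubshift.shiftIter_mem_iff (hX : IsSubshift X) (k : ℤ) {x : ℤ → A} :
    shiftIter k x ∈ X ↔ x ∈ X := by
  induction k using Int.induction_on with
  | zero => rw [shiftIter_zero]
  | succ k ih => rw [shiftIter_add_one, hX.shift_mem_iff, ih]
  | pred k ih => rw [← ih, ← hX.shift_mem_iff, ← shiftIter_add_one, sub_add_cancel]

lemma exists_apply_eq_of_mem_closure_orbit [DiscreteTopology A] {x y : ℤ → A}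
    (hx : x ∈ closure (orbit y)) : ∃ k : ℤ, y k = x 0 := by
  have hopen : IsOpen ((fun z : ℤ → A => z 0) ⁻¹' {x 0}) :=
    (isOpen_discrete {x 0}).preimage (continuous_apply 0)
  obtain ⟨_, hz, k, rfl⟩ := mem_closure_iff.1 hx _ hopen rfl
  exact ⟨k, by simpa [shiftIter] using hz⟩

lemma IsMinimalSubshift.exists_syndetic_letter [Finite A] [DiscreteTopology A]
    (hX : IsMinimalSubshift X) :
    ∃ (a : A) (R : ℕ), ∀ x ∈ X, ∀ i : ℤ, ∃ r < R, x (i + r) = a := by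
  obtain ⟨hsub, ⟨x₀, hx₀⟩, hdense⟩ := hX
  have hcover : X ⊆ ⋃ k : ℤ, (fun y : ℤ → A => y k) ⁻¹' {x₀ 0} := fun y hy =>
    Set.mem_iUnion.2 (exists_apply_eq_of_mem_closure_orbit (hdense y hy hx₀))
  obtain ⟨t, ht⟩ := hsub.1.isCompact.elim_finite_subcover _
    (fun k => (isOpen_discrete {x₀ 0}).preimage (continuous_apply k)) hcover
  obtain ⟨N, hN⟩ : ∃ N : ℕ, ∀ k ∈ t, k.natAbs ≤ N :=
    ⟨_, fun k hk => Finset.le_sup hk⟩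
  refine ⟨x₀ 0, 2 * N + 1, fun x hx i => ?_⟩
  obtain ⟨k, hk, hxk⟩ := Set.mem_iUnion₂.1 (ht ((hsub.shiftIter_mem_iff (i + N)).2 hx))
  have hkN := hN k hk
  refine ⟨(k + N).toNat, by omega, ?_⟩
  have hocc : x (k + (i + N)) = x₀ 0 := hxk
  rw [← hocc]
  congr 1
  omega

end Minimality

section Birkhoff

lemma shift_iterate_apply (k : ℕ) (x : ℤ → A) (n : ℤ) : shift^[k] x n = x (n + k) := by
  induction k generalizing x with
  | zero => simp
  | succ k ih =>
      rw [Function.iterate_succ_apply, ih, shift, Nat.cast_succ, add_assoc]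

lemma birkhoffSum_shift_eq_wsum_window (c : A → ℝ) (n : ℕ) (x : ℤ → A) :
    birkhoffSum shift (fun y => c (y 0)) n x = wsum c (window x 0 n) := by
  induction n with
  | zero => simp [window_eq_map_range, wsum]
  | succ n ih =>
      rw [birkhoffSum_succ, ih, window_succ, wsum_append, shift_iterate_apply]
      simp [wsum]

/-- Cutting the orbit at occurrences of a syndetic letter, the Birkhoff sum of a
letter-coboundary is a difference of two sums over words shorter than the gap bound. -/
lemma IsLetterCoboundary.exists_abs_birkhoffSum_le [Finite A] [TopologicalSpace A]
    [DiscreteTopology A] {X : Set (ℤ → A)} (hX : IsMinimalSubshift X) {c : A → ℝ}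
    (hc : IsLetterCoboundary X c) :
    ∃ C : ℝ, ∀ x ∈ X, ∀ n : ℕ, |birkhoffSum shift (fun y => c (y 0)) n x| ≤ C := by
  obtain ⟨a, R, hR⟩ := hX.exists_syndetic_letter
  obtain ⟨M, hM⟩ := Finite.exists_le fun a => |c a|
  refine ⟨2 * R * M, fun x hx n => ?_⟩
  obtain ⟨r, hr, hxr⟩ := hR x hx 0
  obtain ⟨s, hs, hxs⟩ := hR x hx n
  have hsplit : wsum c (window x 0 n) = wsum c (window x 0 r) - wsum c (window x n s) := by
    rw [hc.wsum_window_eq_of_apply_eq hx hxr (q := n + s) (by simpa using hxs), window_add,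
      wsum_append, zero_add, add_sub_cancel_right]
  have hM0 : 0 ≤ M := (abs_nonneg _).trans (hM a)
  have hrM := abs_wsum_le hM (window x 0 r)
  have hsM := abs_wsum_le hM (window x n s)
  rw [window_length] at hrM hsM
  have hr' : (r : ℝ) ≤ R := by exact_mod_cast hr.le
  have hs' : (s : ℝ) ≤ R := by exact_mod_cast hs.le
  rw [birkhoffSum_shift_eq_wsum_window, hsplit]
  calc |wsum c (window x 0 r) - wsum c (window x n s)|
      ≤ r * M + s * M := (abs_sub _ _).trans (add_le_add hrM hsM)
    _ ≤ 2 * R * M := by nlinarith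

end Birkhoff

section Measure

variable {α : Type*} [MeasurableSpace α] {μ : Measure α}

lemma _root_.MeasureTheory.MeasurePreserving.integral_birkhoffSum {f : α → α}
    (hf : MeasurePreserving f μ μ) {g : α → ℝ} (hg : Integrable g μ) (n : ℕ) :
    ∫ x, birkhoffSum f g n x ∂μ = n * ∫ x, g x ∂μ := by
  have hcomp (k : ℕ) : Integrable (fun x => g (f^[k] x)) μ :=
    (hf.iterate k).integrable_comp_of_integrable hg
  simp only [birkhoffSum]
  rw [integral_finsetSum _ fun k _ => hcomp k]
  have hk (k : ℕ) : ∫ x, g (f^[k] x) ∂μ = ∫ x, g x ∂μ := by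
    rw [← integral_map (hf.iterate k).measurable.aemeasurable, (hf.iterate k).map_eq]
    exact hg.aestronglyMeasurable.mono_ac (by rw [(hf.iterate k).map_eq])
  simp [hk]

lemma integral_eq_zero_of_ae_abs_birkhoffSum_le [IsFiniteMeasure μ] {f : α → α}
    (hf : MeasurePreserving f μ μ) {g : α → ℝ} (hg : Integrable g μ) {C : ℝ}
    (hC : ∀ᵐ x ∂μ, ∀ n, |birkhoffSum f g n x| ≤ C) : ∫ x, g x ∂μ = 0 := by
  have hbound (n : ℕ) : n * |∫ x, g x ∂μ| ≤ C * μ.real Set.univ := by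
    have := norm_integral_le_of_norm_le_const
      (hC.mono fun x hx => (Real.norm_eq_abs _).trans_le (hx n))
    rwa [hf.integral_birkhoffSum hg, Real.norm_eq_abs, abs_mul, Nat.abs_cast] at this
  by_contra hne
  obtain ⟨n, hn⟩ := exists_nat_gt (C * μ.real Set.univ / |∫ x, g x ∂μ|)
  rw [div_lt_iff₀ (abs_pos.2 hne)] at hn
  exact (hbound n).not_gt hn

lemma integral_comp_eq_sum_measureReal_preimage [Fintype A] [MeasurableSpace A]
    [MeasurableSingletonClass A] [IsFiniteMeasure μ] {φ : α → A} (hφ : Measurable φ)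
    (c : A → ℝ) : ∫ x, c (φ x) ∂μ = ∑ a, μ.real (φ ⁻¹' {a}) * c a := by
  rw [← integral_map hφ.aemeasurable (measurable_of_finite c).aestronglyMeasurable,
    integral_fintype Integrable.of_finite]
  simp [Measure.real, Measure.map_apply hφ (measurableSet_singleton _)]

end Measure

lemma measurable_shift [MeasurableSpace A] : Measurable (shift : (ℤ → A) → ℤ → A) :=
  measurable_pi_lambda _ fun n => measurable_pi_apply (n + 1)

lemma measure_cyl_singleton [MeasurableSpace A] {μ : Measure (ℤ → A)} {X : Set (ℤ → A)}
    (hX : μ Xᶜ = 0) (a : A) : μ (cyl X [a]) = μ ((fun x => x 0) ⁻¹' {a}) := by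
  have hcyl : cyl X [a] = (fun x => x 0) ⁻¹' {a} ∩ X := by
    ext x
    simp [cyl, window_eq_map_range, and_comm]
  rw [hcyl, measure_inter_conull hX]

/-- **Lemma 3.5.** Let `X` be a minimal subshift and `c` a letter-coboundary on `X`.
Then `Σ_a μ([a]) c(a) = 0` for every `S`-invariant Borel probability measure `μ` on `X`. -/
theorem coboundary_integral_zero
    {A : Type*} [Fintype A] [TopologicalSpace A] [DiscreteTopology A]
    [MeasurableSpace A] [BorelSpace A]
    (X : Set (ℤ → A)) (hX : IsMinimalSubshift X)
    (c : A → ℝ) (hc : IsLetterCoboundary X c)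
    (μ : Measure (ℤ → A)) (hprob : IsProbabilityMeasure μ) (hXfull : μ X = 1)
    (hinv : ∀ B : Set (ℤ → A), MeasurableSet B → μ (shift ⁻¹' B) = μ B) :
    ∑ a : A, (μ (cyl X [a])).toReal * c a = 0 := by
  have hshift : MeasurePreserving shift μ μ := ⟨measurable_shift, Measure.ext fun B hB => by
    rw [Measure.map_apply measurable_shift hB, hinv B hB]⟩
  have hXc : μ Xᶜ = 0 := (prob_compl_eq_zero_iff hX.1.1.measurableSet).2 hXfull
  have hae : ∀ᵐ x ∂μ, x ∈ X := mem_ae_iff.2 hXc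
  obtain ⟨C, hC⟩ := hc.exists_abs_birkhoffSum_le hX
  have hzero := integral_eq_zero_of_ae_abs_birkhoffSum_le (g := fun x => c (x 0)) hshift
    (Integrable.of_finite.comp_measurable (measurable_pi_apply 0)) (hae.mono hC)
  rw [integral_comp_eq_sum_measureReal_preimage (measurable_pi_apply 0)] at hzero
  simpa [measure_cyl_singleton hXc, Measure.real] using hzero

end SAdicPaper
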